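/- The classical dilogarithm identity of type A₂ holds: for all real Y₁, Y₂ > 0, with the five y-variables arising along the pentagon mutation loop, the signed sum of Rogers dilogarithm values vanishes; equivalently, for 0 < a, b < 1, L(a) + L(b) − L(ab) − L(a(1−b)/(1−ab)) − L(b(1−a)/(1−ab)) = 0. -/

import Mathlib

open Real MeasureTheory Set Filter


open Real MeasureTheory Set Filter

noncomputable def fI (t : ℝ) : ℝ := Real.log (1 - t) / t + Real.log t / (1 - t)

lemma fI_meas : Measurable fI :=
  ((Real.measurable_log.comp (measurable_const.sub measurable_id)).div measurable_id).add
    (Real.measurable_log.div (measurable_const.sub measurable_id))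

lemma fI_integrable {c : ℝ} (hc0 : 0 ≤ c) (hc1 : c < 1) : IntervalIntegrable fI volume 0 c := by
  have hbound : IntervalIntegrable
      (fun t : ℝ => 1/(1-c) + 2/(1-c) * t ^ (-(1/2) : ℝ)) volume 0 c :=
    intervalIntegrable_const.add
      ((intervalIntegral.intervalIntegrable_rpow' (by norm_num)).const_mul _)
  refine hbound.mono_fun' fI_meas.aestronglyMeasurable ?_
  filter_upwards [ae_restrict_mem measurableSet_uIoc] with t ht
  rw [Set.uIoc_of_le hc0] at ht
  obtain ⟨ht0, htc⟩ := ht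
  have ht1 : t < 1 := lt_of_le_of_lt htc hc1
  have h1t : 0 < 1 - t := by linarith
  have h1c : 0 < 1 - c := by linarith
  have hlog1 : |Real.log (1 - t)| ≤ t / (1 - c) := by
    have hneg : Real.log (1 - t) ≤ 0 := Real.log_nonpos (by linarith) (by linarith)
    have : Real.log (1 - t)⁻¹ ≤ (1 - t)⁻¹ - 1 :=
      Real.log_le_sub_one_of_pos (by positivity)
    rw [Real.log_inv] at this
    have hineq : -Real.log (1 - t) ≤ t / (1 - t) := by
      have : (1 - t)⁻¹ - 1 = t / (1 - t) := by field_simp; ring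
      linarith [this ▸ ‹-Real.log (1 - t) ≤ (1 - t)⁻¹ - 1›]
    rw [abs_of_nonpos hneg]
    calc -Real.log (1 - t) ≤ t / (1 - t) := hineq
      _ ≤ t / (1 - c) := by
        apply div_le_div_of_nonneg_left ht0.le h1c
        linarith
  have hlogt : |Real.log t| ≤ 2 * t ^ (-(1/2) : ℝ) := by
    have hneg : Real.log t ≤ 0 := Real.log_nonpos ht0.le (by linarith)
    have h2 : Real.log (t ^ (-(1/2) : ℝ)) ≤ t ^ (-(1/2) : ℝ) - 1 :=
      Real.log_le_sub_one_of_pos (by positivity)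
    rw [Real.log_rpow ht0] at h2
    rw [abs_of_nonpos hneg]
    nlinarith [Real.rpow_nonneg ht0.le (-(1/2) : ℝ)]
  have habs : ‖fI t‖ ≤ |Real.log (1 - t)| / t + |Real.log t| / (1 - t) := by
    calc ‖fI t‖ ≤ |Real.log (1 - t) / t| + |Real.log t / (1 - t)| := abs_add_le _ _
      _ = |Real.log (1 - t)| / t + |Real.log t| / (1 - t) := by
          rw [abs_div, abs_div, abs_of_pos ht0, abs_of_pos h1t]
  calc ‖fI t‖ ≤ |Real.log (1 - t)| / t + |Real.log t| / (1 - t) := habs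
    _ ≤ (t / (1 - c)) / t + (2 * t ^ (-(1/2) : ℝ)) / (1 - c) := by
        gcongr
    _ = 1/(1-c) + 2/(1-c) * t ^ (-(1/2) : ℝ) := by
        field_simp

/-- The Rogers dilogarithm `L(x) = -(1/2) ∫₀ˣ (log(1-t)/t + log t/(1-t)) dt`. -/
noncomputable def rogersL (x : ℝ) : ℝ :=
  -(1 / 2) * ∫ t in (0 : ℝ)..x, (Real.log (1 - t) / t + Real.log t / (1 - t))

lemma rogersL_eq : rogersL = fun u => -(1/2) * ∫ t in (0:ℝ)..u, fI t := by
  ext u; simp only [rogersL, fI]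

lemma hasDerivAt_rogersL {x : ℝ} (h0 : 0 < x) (h1 : x < 1) :
    HasDerivAt rogersL (-(1/2) * (Real.log (1 - x) / x + Real.log x / (1 - x))) x := by
  have hint : IntervalIntegrable fI volume 0 x := fI_integrable h0.le h1
  have hmeas : StronglyMeasurableAtFilter fI (nhds x) :=
    ⟨Set.univ, Filter.univ_mem, fI_meas.aestronglyMeasurable.restrict⟩
  have c1 : ContinuousAt (fun t : ℝ => Real.log (1 - t)) x :=
    (Real.continuousAt_log (by linarith : (1:ℝ) - x ≠ 0)).comp
      ((continuous_const.sub continuous_id).continuousAt)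
  have c2 : ContinuousAt Real.log x := Real.continuousAt_log h0.ne'
  have hcont : ContinuousAt fI x :=
    (c1.div continuousAt_id h0.ne').add
      (c2.div (continuous_const.sub continuous_id).continuousAt (by simp; linarith))
  have h := (intervalIntegral.integral_hasDerivAt_right hint hmeas hcont).const_mul (-(1/2) : ℝ)
  rw [rogersL_eq]
  exact h

lemma tendsto_rogersL_zero : Filter.Tendsto rogersL (nhdsWithin 0 (Set.Ioi 0)) (nhds 0) := by
  have hint : IntegrableOn fI (Set.uIcc (0:ℝ) (1/2)) volume := by
    rw [Set.uIcc_of_le (by norm_num)]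
    exact (intervalIntegrable_iff_integrableOn_Icc_of_le (by norm_num)).mp
      (fI_integrable (by norm_num) (by norm_num))
  have hcont := intervalIntegral.continuousOn_primitive_interval hint
  have h0 : ContinuousWithinAt (fun x => ∫ t in (0:ℝ)..x, fI t) (Set.uIcc (0:ℝ) (1/2)) 0 :=
    hcont 0 Set.left_mem_uIcc
  have hle : nhdsWithin (0:ℝ) (Set.Ioi 0) ≤ nhdsWithin 0 (Set.uIcc (0:ℝ) (1/2)) := by
    rw [← nhdsWithin_Ioc_eq_nhdsGT (by norm_num : (0:ℝ) < 1/2)]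
    exact nhdsWithin_mono _ (by rw [Set.uIcc_of_le (by norm_num)]; exact Set.Ioc_subset_Icc_self)
  have h1 : Filter.Tendsto (fun x => ∫ t in (0:ℝ)..x, fI t) (nhdsWithin (0:ℝ) (Set.Ioi 0))
      (nhds 0) := by
    have := h0.tendsto.mono_left hle
    simpa using this
  rw [rogersL_eq]
  simpa using h1.const_mul (-(1/2) : ℝ)

lemma hasDerivAt_G {a : ℝ} (ha0 : 0 < a) (ha1 : a < 1) {b : ℝ} (hb0 : 0 < b) (hb1 : b < 1) :
    HasDerivAt (fun x => rogersL a + rogersL x - rogersL (a*x) -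
      rogersL (a*(1-x)/(1-a*x)) - rogersL (x*(1-a)/(1-a*x))) 0 b := by
  have hab : 0 < 1 - a * b := by nlinarith
  have hab0 : 0 < a * b := by positivity
  have hab1 : a * b < 1 := by nlinarith
  have h1b : 0 < 1 - b := by linarith
  have h1a : 0 < 1 - a := by linarith
  have hu0 : 0 < a * (1 - b) / (1 - a * b) := by positivity
  have hu1 : a * (1 - b) / (1 - a * b) < 1 := by
    rw [div_lt_one hab]; nlinarith
  have hv0 : 0 < b * (1 - a) / (1 - a * b) := by positivity
  have hv1 : b * (1 - a) / (1 - a * b) < 1 := by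
    rw [div_lt_one hab]; nlinarith
  -- inner derivatives
  have i2 : HasDerivAt (fun x : ℝ => a * x) (a * 1) b := (hasDerivAt_id b).const_mul a
  have hden : HasDerivAt (fun x : ℝ => 1 - a * x) (-(a * 1)) b := i2.const_sub 1
  have hnum3 : HasDerivAt (fun x : ℝ => a * (1 - x)) (a * (-1)) b :=
    ((hasDerivAt_id b).const_sub 1).const_mul a
  have hnum4 : HasDerivAt (fun x : ℝ => x * (1 - a)) (1 * (1 - a)) b :=
    (hasDerivAt_id b).mul_const (1 - a)
  have i3 : HasDerivAt (fun x : ℝ => a * (1 - x) / (1 - a * x))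
      ((a * (-1) * (1 - a * b) - a * (1 - b) * (-(a * 1))) / (1 - a * b) ^ 2) b :=
    hnum3.div hden hab.ne'
  have i4 : HasDerivAt (fun x : ℝ => x * (1 - a) / (1 - a * x))
      ((1 * (1 - a) * (1 - a * b) - b * (1 - a) * (-(a * 1))) / (1 - a * b) ^ 2) b :=
    hnum4.div hden hab.ne'
  have d1 := hasDerivAt_rogersL hb0 hb1
  have d2 := (hasDerivAt_rogersL hab0 hab1).comp b i2
  have d3 := (hasDerivAt_rogersL hu0 hu1).comp b i3
  have d4 := (hasDerivAt_rogersL hv0 hv1).comp b i4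
  have h := ((((hasDerivAt_const b (rogersL a)).add d1).sub d2).sub d3).sub d4
  refine HasDerivAt.congr_deriv h ?_
  have e1 : 1 - a * (1 - b) / (1 - a * b) = (1 - a) / (1 - a * b) := by
    field_simp; ring
  have e2 : 1 - b * (1 - a) / (1 - a * b) = (1 - b) / (1 - a * b) := by
    rw [eq_div_iff hab.ne', sub_mul, div_mul_cancel₀ _ hab.ne']; ring
  rw [e1, e2, Real.log_div (by positivity : a * (1 - b) ≠ 0) hab.ne',
    Real.log_div h1a.ne' hab.ne', Real.log_div (by positivity : b * (1 - a) ≠ 0) hab.ne',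
    Real.log_div h1b.ne' hab.ne', Real.log_mul ha0.ne' h1b.ne',
    Real.log_mul hb0.ne' h1a.ne', Real.log_mul ha0.ne' hb0.ne']
  have hba : 1 - b * a ≠ 0 := by rw [mul_comm]; exact hab.ne'
  field_simp
  ring

/-- The classical dilogarithm identity of type `A₂`: the signed sum of Rogers dilogarithm
values along the pentagon mutation loop vanishes, i.e. the five-term relation
`L(a) + L(b) − L(ab) − L(a(1−b)/(1−ab)) − L(b(1−a)/(1−ab)) = 0` for `0 < a, b < 1`. -/
theorem rogersL_A2_identity (a b : ℝ) (ha0 : 0 < a) (ha1 : a < 1) (hb0 : 0 < b) (hb1 : b < 1) :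
    rogersL a + rogersL b - rogersL (a * b) - rogersL (a * (1 - b) / (1 - a * b)) -
      rogersL (b * (1 - a) / (1 - a * b)) = 0 := by
  set G : ℝ → ℝ := fun x => rogersL a + rogersL x - rogersL (a*x) -
      rogersL (a*(1-x)/(1-a*x)) - rogersL (x*(1-a)/(1-a*x)) with hGdef
  show G b = 0
  have hIoo : Set.Ioo (0:ℝ) 1 ∈ nhdsWithin (0:ℝ) (Set.Ioi 0) := by
    rw [← Set.Ioi_inter_Iio]
    exact inter_mem self_mem_nhdsWithin (mem_nhdsWithin_of_mem_nhds (Iio_mem_nhds one_pos))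
  -- constancy on (0, b]
  have key : ∀ c ∈ Set.Ioc (0:ℝ) b, G c = G b := by
    intro c hc
    rcases eq_or_lt_of_le hc.2 with h | h
    · rw [h]
    · have hcont : ContinuousOn G (Set.Icc c b) := fun x hx =>
        (hasDerivAt_G ha0 ha1 (lt_of_lt_of_le hc.1 hx.1)
          (lt_of_le_of_lt hx.2 hb1)).continuousAt.continuousWithinAt
      have hderiv : ∀ x ∈ Set.Ico c b, HasDerivWithinAt G 0 (Set.Ici x) x := fun x hx =>
        (hasDerivAt_G ha0 ha1 (lt_of_lt_of_le hc.1 hx.1)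
          (lt_trans hx.2 hb1)).hasDerivWithinAt
      exact (constant_of_has_deriv_right_zero hcont hderiv b
        (Set.right_mem_Icc.mpr h.le)).symm
  -- limit of G at 0⁺ is 0
  have t2 : Tendsto rogersL (nhdsWithin (0:ℝ) (Set.Ioi 0)) (nhds 0) := tendsto_rogersL_zero
  have t3 : Tendsto (fun c => rogersL (a * c)) (nhdsWithin (0:ℝ) (Set.Ioi 0)) (nhds 0) := by
    refine t2.comp (tendsto_nhdsWithin_of_tendsto_nhds_of_eventually_within _ ?_ ?_)
    · have : Tendsto (fun c : ℝ => a * c) (nhds 0) (nhds (a * 0)) :=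
        (continuous_const.mul continuous_id).tendsto 0
      simpa using this.mono_left nhdsWithin_le_nhds
    · filter_upwards [self_mem_nhdsWithin] with c hc
      exact mul_pos ha0 hc
  have t4 : Tendsto (fun c => rogersL (a * (1 - c) / (1 - a * c)))
      (nhdsWithin (0:ℝ) (Set.Ioi 0)) (nhds (rogersL a)) := by
    have hcont : ContinuousAt (fun c : ℝ => a * (1 - c) / (1 - a * c)) 0 := by
      apply ContinuousAt.div
      · fun_prop
      · fun_prop
      · norm_num
    have hval : a * (1 - (0:ℝ)) / (1 - a * 0) = a := by norm_num
    have h1 : Tendsto (fun c : ℝ => a * (1 - c) / (1 - a * c)) (nhdsWithin (0:ℝ) (Set.Ioi 0))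
        (nhds a) := by
      have := hcont.tendsto.mono_left (nhdsWithin_le_nhds (s := Set.Ioi (0:ℝ)))
      rwa [hval] at this
    exact ((hasDerivAt_rogersL ha0 ha1).continuousAt.tendsto).comp h1
  have t5 : Tendsto (fun c => rogersL (c * (1 - a) / (1 - a * c)))
      (nhdsWithin (0:ℝ) (Set.Ioi 0)) (nhds 0) := by
    refine t2.comp (tendsto_nhdsWithin_of_tendsto_nhds_of_eventually_within _ ?_ ?_)
    · have hcont : ContinuousAt (fun c : ℝ => c * (1 - a) / (1 - a * c)) 0 := by
        apply ContinuousAt.div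
        · fun_prop
        · fun_prop
        · norm_num
      have := hcont.tendsto.mono_left (nhdsWithin_le_nhds (s := Set.Ioi (0:ℝ)))
      simpa using this
    · filter_upwards [hIoo] with c hc
      obtain ⟨hc1, hc2⟩ := hc
      have hd : 0 < 1 - a * c := by nlinarith
      have h1a : 0 < 1 - a := by linarith
      exact Set.mem_Ioi.mpr (by positivity)
  have hlim : Tendsto G (nhdsWithin (0:ℝ) (Set.Ioi 0)) (nhds 0) := by
    have := ((((tendsto_const_nhds (x := rogersL a)
      (f := nhdsWithin (0:ℝ) (Set.Ioi 0))).add t2).sub t3).sub t4).sub t5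
    simpa [hGdef] using this
  have hconst : Tendsto (fun _ : ℝ => G b) (nhdsWithin (0:ℝ) (Set.Ioi 0)) (nhds 0) := by
    apply hlim.congr'
    filter_upwards [Ioc_mem_nhdsGT hb0] with c hc
    exact key c hc
  exact tendsto_nhds_unique tendsto_const_nhds hconst
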